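/- The GM (Generalized Majority / Misra–Gries) algorithm with c counters, run on a stream of length n, guarantees that every element occurring more than n/(c+1) times in the stream is monitored by some counter at the end of the run. -/

import Mathlib

/-!
Let `f` be the counters after a prefix `p`, with total weight `f.degree`. Every increment or
new assignment raises the weight by one, and every decrement round lowers it by `c` while the
stream grows by one, so `p.length - f.degree` is `c + 1` times the number of decrement rounds.
An occurrence of `x` not recorded in `f x` was cancelled in some decrement round (it arrived
then, or `x`'s counter was decremented), at most one per round. Hence
`(c + 1) * (p.count x - f x) ≤ p.length - f.degree`, and `f x = 0` forces
`p.count x ≤ p.length / (c + 1)`.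
-/

/-- One step of the GM (Generalized Majority / Misra–Gries) algorithm with `c`
counters.  The state records the counter value of each monitored element (elements
with value `0` are unmonitored).  If the arriving element is monitored, its counter is
incremented; otherwise, if a counter is free, it starts monitoring the element with
count `1`; otherwise all counters are decremented. -/
noncomputable def mgStep {α : Type*} [DecidableEq α] (c : ℕ) (f : α →₀ ℕ) (a : α) : α →₀ ℕ :=
  if 0 < f a then f.update a (f a + 1)
  else if f.support.card < c then f.update a 1
  else Finsupp.mapRange (· - 1) (by simp) f

open Finset Finsupp

namespace Finsupp

variable {ι : Type*}

lemma degree_mapRange_pred_add_card (f : ι →₀ ℕ) :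
    (f.mapRange (· - 1) (by simp)).degree + #f.support = f.degree := by
  have hpred : (f.mapRange (· - 1) (by simp)).degree = ∑ i ∈ f.support, (f i - 1) :=
    Finset.sum_subset support_mapRange fun i _ hi => by simpa using hi
  rw [hpred, degree_apply, card_eq_sum_ones, ← sum_add_distrib]
  exact Finset.sum_congr rfl fun i hi => Nat.sub_one_add_one (mem_support_iff.1 hi)

variable [DecidableEq ι]

lemma update_succ_eq_add_single (f : ι →₀ ℕ) (a : ι) :
    f.update a (f a + 1) = f + single a 1 := by
  ext i
  rcases eq_or_ne i a with rfl | h <;> simp [update_apply, *]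

lemma support_add_single_one (f : ι →₀ ℕ) (a : ι) :
    (f + single a 1).support = insert a f.support := by
  rw [support_add_eq_union, support_single _ one_ne_zero, union_comm, insert_eq]

end Finsupp

section MisraGries

variable {α : Type*} [DecidableEq α] {c : ℕ} {p : List α} {f : α →₀ ℕ} {a : α}

lemma mgStep_of_pos (ha : 0 < f a) : mgStep c f a = f + single a 1 := by
  rw [mgStep, if_pos ha, update_succ_eq_add_single]

lemma mgStep_of_card_lt (ha : f a = 0) (hcard : #f.support < c) :
    mgStep c f a = f + single a 1 := by
  rw [mgStep, if_neg (by omega), if_pos hcard, ← update_succ_eq_add_single, ha]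

lemma mgStep_of_le_card (ha : f a = 0) (hcard : c ≤ #f.support) :
    mgStep c f a = f.mapRange (· - 1) (by simp) := by
  rw [mgStep, if_neg (by omega), if_neg (by omega)]

def MGInvariant (c : ℕ) (p : List α) (f : α →₀ ℕ) : Prop :=
  #f.support ≤ c ∧ ∀ x, (c + 1) * p.count x + f.degree ≤ p.length + (c + 1) * f x

lemma MGInvariant.add_single (h : MGInvariant c p f) (hcard : #(insert a f.support) ≤ c) :
    MGInvariant c (p ++ [a]) (f + single a 1) := by
  refine ⟨support_add_single_one f a ▸ hcard, fun x => ?_⟩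
  have hx := h.2 x
  rw [List.count_append, List.count_singleton', List.length_append, map_add, degree_single,
    Finsupp.add_apply, single_apply]
  split_ifs <;> simp only [List.length_singleton] <;> linarith

lemma MGInvariant.mapRange_pred (h : MGInvariant c p f) (ha : f a = 0) (hcard : #f.support = c) :
    MGInvariant c (p ++ [a]) (f.mapRange (· - 1) (by simp)) := by
  refine ⟨(card_le_card support_mapRange).trans h.1, fun x => ?_⟩
  have hx := h.2 x
  have hdeg := degree_mapRange_pred_add_card f
  rw [List.count_append, List.count_singleton', List.length_append, mapRange_apply]
  simp only [List.length_singleton]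
  split_ifs with hax
  · subst hax
    simp only [ha, zero_tsub, mul_zero] at hx ⊢
    linarith
  · rcases Nat.eq_zero_or_pos (f x) with hfx | hfx
    · simp only [hfx, zero_tsub, mul_zero] at hx ⊢
      linarith
    · have hpred : (c + 1) * (f x - 1) + (c + 1) = (c + 1) * f x := by
        rw [← mul_add_one, Nat.sub_one_add_one hfx.ne']
      linarith

lemma MGInvariant.mgStep (h : MGInvariant c p f) : MGInvariant c (p ++ [a]) (mgStep c f a) := by
  rcases Nat.eq_zero_or_pos (f a) with ha | ha
  · rcases lt_or_ge #f.support c with hcard | hcard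
    · rw [mgStep_of_card_lt ha hcard]
      exact h.add_single ((card_insert_le _ _).trans hcard)
    · rw [mgStep_of_le_card ha hcard]
      exact h.mapRange_pred ha (le_antisymm h.1 hcard)
  · rw [mgStep_of_pos ha]
    exact h.add_single (by rw [insert_eq_of_mem (mem_support_iff.2 ha.ne')]; exact h.1)

lemma mgInvariant_foldl (c : ℕ) (p : List α) : MGInvariant c p (p.foldl (mgStep c) 0) := by
  induction p using List.reverseRecOn with
  | nil => simp [MGInvariant]
  | append_singleton p a ih => rw [List.foldl_append]; exact ih.mgStep

end MisraGries

theorem gm_monitors_frequent_elements_general {α : Type*} [DecidableEq α]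
    (c : ℕ) (s : List α) (x : α)
    (hfreq : (s.length : ℝ) / (c + 1) < s.count x) :
    0 < (s.foldl (mgStep c) 0) x := by
  by_contra! hzero
  have hbound := (mgInvariant_foldl c s).2 x
  rw [Nat.le_zero.1 hzero, mul_zero, add_zero] at hbound
  have hcount : (c + 1) * s.count x ≤ s.length := le_of_add_le_left hbound
  have hcount' : ((c + 1) * s.count x : ℝ) ≤ s.length := by exact_mod_cast hcount
  rw [div_lt_iff₀ (by positivity)] at hfreq
  linarith

/-- The GM algorithm with `c` counters, run on a stream `s` of length `n`, guarantees
that every element occurring more than `n/(c+1)` times in the stream is monitored by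
some counter (has a positive counter value) at the end of the run. -/
theorem gm_monitors_frequent_elements {α : Type*} [DecidableEq α]
    (c : ℕ) (hc : 1 ≤ c) (s : List α) (x : α)
    (hfreq : (s.length : ℝ) / (c + 1) < s.count x) :
    0 < (s.foldl (mgStep c) 0) x :=
  gm_monitors_frequent_elements_general c s x hfreq
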